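/- arXiv:2403.08064 — 7 statements merged into one kernel-verified Lean document; each statement's English description precedes it below -/
import Mathlib

section
/- Let V be a finite-dimensional real vector space and B a symmetric bilinear form on V satisfying the Hodge index condition. If u, v, w ∈ V and B(u,u) > 0, then the determinant of the 3×3 Gram matrix with entries (B(u,u), B(u,v), B(u,w); B(v,u), B(v,v), B(v,w); B(w,u), B(w,v), B(w,w)) is nonnegative. -/
/-!
The Hodge index condition makes `B` negative semidefinite on the `B`-orthogonal complement of a
vector `u` with `B u u > 0`: a vector `x ⊥ u` with `B x x > 0` would span, together with `u`, a
plane on which `B` is positive definite. Cauchy–Schwarz for `-B` on that complement, applied to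
`B u u • v - B u v • u` and `B u u • w - B u w • u`, is the inequality `det ≥ 0` multiplied by
`(B u u)³`.
-/

/-- A symmetric bilinear form `B` on a real vector space satisfies the Hodge index
condition if every subspace on which `B` is positive definite has dimension at most 1. -/
def HodgeIndexCond {V : Type*} [AddCommGroup V] [Module ℝ V]
    (B : LinearMap.BilinForm ℝ V) : Prop :=
  ∀ W : Submodule ℝ V, (∀ w ∈ W, w ≠ 0 → 0 < B w w) → Module.finrank ℝ W ≤ 1

theorem Matrix.mul_det_fin_three_symm {R : Type*} [CommRing R] (a b c d e f : R) :
    a * !![a, b, c; b, d, e; c, e, f].det =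
      (a * d - b ^ 2) * (a * f - c ^ 2) - (a * e - b * c) ^ 2 := by
  rw [Matrix.det_fin_three]
  simp only [Fin.isValue, of_apply, cons_val', cons_val_zero, cons_val_fin_one, cons_val_one,
    cons_val]
  ring

namespace LinearMap.BilinForm

variable {V : Type*} [AddCommGroup V] [Module ℝ V] {B : LinearMap.BilinForm ℝ V}

theorem apply_smul_sub_smul_eq_zero (u v : V) : B u (B u u • v - B u v • u) = 0 := by
  simp only [map_sub, map_smul, smul_eq_mul]
  ring

theorem IsSymm.apply_smul_sub_smul_apply_smul_sub_smul (hsym : B.IsSymm) (u v w : V) :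
    B (B u u • v - B u v • u) (B u u • w - B u w • u) =
      B u u * (B u u * B v w - B u v * B u w) := by
  simp only [map_sub, map_smul, LinearMap.sub_apply, smul_apply, smul_eq_mul, hsym.eq v u]
  ring

theorem _root_.HodgeIndexCond.apply_self_nonpos_of_apply_eq_zero (hhodge : HodgeIndexCond B)
    (hsym : B.IsSymm) {u x : V} (hu : 0 < B u u) (hux : B u x = 0) : B x x ≤ 0 := by
  by_contra! hx
  have hxu : B x u = 0 := hsym.eq_iff.mp hux
  have hpos (s t : ℝ) (h : s ≠ 0 ∨ t ≠ 0) : 0 < B (s • u + t • x) (s • u + t • x) := by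
    have hsq : B (s • u + t • x) (s • u + t • x) = s ^ 2 * B u u + t ^ 2 * B x x := by
      simp only [map_add, map_smul, LinearMap.add_apply, smul_apply, smul_eq_mul, hux, hxu,
        mul_zero, add_zero, zero_add]
      ring
    rw [hsq]
    rcases h with hs | ht
    · exact add_pos_of_pos_of_nonneg (mul_pos (sq_pos_of_ne_zero hs) hu) (by positivity)
    · exact add_pos_of_nonneg_of_pos (by positivity) (mul_pos (sq_pos_of_ne_zero ht) hx)
  have hli : LinearIndependent ℝ ![u, x] := LinearIndependent.pair_iff.mpr fun s t hst => by
    by_contra h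
    simpa [hst] using hpos s t (not_and_or.mp h)
  have hdim := hhodge (Submodule.span ℝ {u, x}) fun z hz hz0 => by
    obtain ⟨s, t, rfl⟩ := Submodule.mem_span_pair.mp hz
    refine hpos s t (not_and_or.mp ?_)
    rintro ⟨rfl, rfl⟩
    simp at hz0
  rw [← Matrix.range_cons_cons_empty, finrank_span_eq_card hli] at hdim
  simp at hdim

theorem _root_.HodgeIndexCond.apply_sq_le_of_apply_eq_zero (hhodge : HodgeIndexCond B)
    (hsym : B.IsSymm) {u x y : V} (hu : 0 < B u u) (hux : B u x = 0) (huy : B u y = 0) :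
    B x y ^ 2 ≤ B x x * B y y := by
  let W := LinearMap.ker (B u)
  have hnonneg (z : W) : 0 ≤ (-B.restrict W) z z :=
    neg_nonneg.mpr (hhodge.apply_self_nonpos_of_apply_eq_zero hsym hu z.2)
  simpa using
    apply_sq_le_of_symm _ hnonneg (isSymm_iff.mp (hsym.restrict W).neg) ⟨x, hux⟩ ⟨y, huy⟩

end LinearMap.BilinForm

theorem stmt_0_general {V : Type*} [AddCommGroup V] [Module ℝ V]
    (B : LinearMap.BilinForm ℝ V) (hsym : B.IsSymm) (hhodge : HodgeIndexCond B)
    (u v w : V) (hu : 0 < B u u) :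
    0 ≤ (Matrix.det !![B u u, B u v, B u w;
                       B v u, B v v, B v w;
                       B w u, B w v, B w w]) := by
  have key := hhodge.apply_sq_le_of_apply_eq_zero hsym hu
    (B.apply_smul_sub_smul_eq_zero u v) (B.apply_smul_sub_smul_eq_zero u w)
  simp only [hsym.apply_smul_sub_smul_apply_smul_sub_smul] at key
  rw [hsym.eq v u, hsym.eq w u, hsym.eq w v]
  refine nonneg_of_mul_nonneg_right ?_ hu
  rw [Matrix.mul_det_fin_three_symm, sub_nonneg]
  exact le_of_mul_le_mul_left (by linarith) (pow_pos hu 2)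

theorem stmt_0 {V : Type*} [AddCommGroup V] [Module ℝ V] [FiniteDimensional ℝ V]
    (B : LinearMap.BilinForm ℝ V) (hsym : B.IsSymm) (hhodge : HodgeIndexCond B)
    (u v w : V) (hu : 0 < B u u) :
    0 ≤ (Matrix.det !![B u u, B u v, B u w;
                       B v u, B v v, B v w;
                       B w u, B w v, B w w]) :=
  stmt_0_general B hsym hhodge u v w hu
end

section
/- Let V be a finite-dimensional real vector space and B a symmetric bilinear form on V satisfying the Hodge index condition. Let N be a linear subspace of V containing a vector x with B(x,x) > 0, let H ∈ V, and let w ∈ N satisfy B(w,n) = 0 for every n ∈ N. Then B(w,H) = 0. -/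
/-!
By the Hodge index condition `B` is negative semidefinite on the hyperplane `ker (B x)`
orthogonal to the positive vector `x`. The vector `w` is an isotropic vector of that
hyperplane, and an isotropic vector of a semidefinite form lies in its radical; since
`V = ℝ x + ker (B x)` and `B w x = 0`, `w` is then orthogonal to all of `V`.
-/

namespace LinearMap.BilinForm.IsSymm

variable {V : Type*} [AddCommGroup V] [Module ℝ V] {B : LinearMap.BilinForm ℝ V}

theorem apply_self_smul_add_smul_of_orthogonal (hsym : B.IsSymm) {x y : V} (hxy : B x y = 0)
    (s t : ℝ) : B (s • x + t • y) (s • x + t • y) = s ^ 2 * B x x + t ^ 2 * B y y := by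
  have hyx : B y x = 0 := by rw [hsym.eq, hxy]
  simp only [map_add, map_smul, LinearMap.add_apply, LinearMap.smul_apply, smul_eq_mul,
    hxy, hyx]
  ring

theorem finrank_span_pair_of_orthogonal_of_pos (hsym : B.IsSymm) {x y : V} (hx : 0 < B x x)
    (hy : 0 < B y y) (hxy : B x y = 0) : Module.finrank ℝ (Submodule.span ℝ {x, y}) = 2 := by
  have hyx : B y x = 0 := by rw [hsym.eq, hxy]
  have hortho : B.iIsOrtho ![x, y] := by
    intro i j hij
    fin_cases i <;> fin_cases j <;> simp_all [Function.onFun]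
  have hli : LinearIndependent ℝ ![x, y] :=
    linearIndependent_of_iIsOrtho hortho (by simp [Fin.forall_fin_two, hx.ne', hy.ne'])
  rw [← Matrix.range_cons_cons_empty, finrank_span_eq_card hli, Fintype.card_fin]

theorem apply_self_nonpos_of_hodgeIndexCond (hsym : B.IsSymm) (hB : HodgeIndexCond B)
    {x y : V} (hx : 0 < B x x) (hxy : B x y = 0) : B y y ≤ 0 := by
  by_contra! hy
  have hpos : ∀ v ∈ Submodule.span ℝ {x, y}, v ≠ 0 → 0 < B v v := by
    rintro v hv hv0
    obtain ⟨s, t, rfl⟩ := Submodule.mem_span_pair.mp hv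
    rw [hsym.apply_self_smul_add_smul_of_orthogonal hxy]
    have hst : s ≠ 0 ∨ t ≠ 0 := by
      contrapose! hv0
      simp [hv0.1, hv0.2]
    rcases hst with hs | ht <;> positivity
  have := hB _ hpos
  rw [hsym.finrank_span_pair_of_orthogonal_of_pos hx hy hxy] at this
  omega

/-- Cauchy–Schwarz in its degenerate case: `t ↦ B (v + t w) (v + t w)` is affine in `t`
when `w` is isotropic, so it can only stay `≤ 0` if its slope `2 B w v` vanishes. -/
theorem apply_eq_zero_of_isotropic_of_nonpos (hsym : B.IsSymm) {P : Submodule ℝ V}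
    (hP : ∀ v ∈ P, B v v ≤ 0) {w v : V} (hwP : w ∈ P) (hvP : v ∈ P) (hw : B w w = 0) :
    B w v = 0 := by
  by_contra hwv
  have hline : ∀ t : ℝ, B (v + t • w) (v + t • w) = B v v + 2 * t * B w v := by
    intro t
    simp only [map_add, map_smul, LinearMap.add_apply, LinearMap.smul_apply, smul_eq_mul, hw,
      hsym.eq v w]
    ring
  have := hP _ (P.add_mem hvP (P.smul_mem ((1 - B v v) / (2 * B w v)) hwP))
  rw [hline] at this
  field_simp at this
  linarith

end LinearMap.BilinForm.IsSymm

theorem stmt_2_general {V : Type*} [AddCommGroup V] [Module ℝ V]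
    (B : LinearMap.BilinForm ℝ V) (hsym : B.IsSymm) (hhodge : HodgeIndexCond B)
    (N : Submodule ℝ V) (x : V) (hxN : x ∈ N) (hx : 0 < B x x)
    (H : V) (w : V) (hwN : w ∈ N) (hw : ∀ n ∈ N, B w n = 0) :
    B w H = 0 := by
  have hwx : B w x = 0 := hw x hxN
  set y := H - (B x H / B x x) • x
  have hyP : y ∈ LinearMap.ker (B x) := by
    simp only [LinearMap.mem_ker, y, map_sub, map_smul, smul_eq_mul]
    field_simp
    ring
  have hwP : w ∈ LinearMap.ker (B x) := by rw [LinearMap.mem_ker, hsym.eq, hwx]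
  have hP : ∀ v ∈ LinearMap.ker (B x), B v v ≤ 0 := fun v hv =>
    hsym.apply_self_nonpos_of_hodgeIndexCond hhodge hx hv
  have hwy : B w y = B w H := by simp [y, hwx]
  rw [← hwy]
  exact hsym.apply_eq_zero_of_isotropic_of_nonpos hP hwP hyP (hw w hwN)

theorem stmt_2 {V : Type*} [AddCommGroup V] [Module ℝ V] [FiniteDimensional ℝ V]
    (B : LinearMap.BilinForm ℝ V) (hsym : B.IsSymm) (hhodge : HodgeIndexCond B)
    (N : Submodule ℝ V) (x : V) (hxN : x ∈ N) (hx : 0 < B x x)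
    (H : V) (w : V) (hwN : w ∈ N) (hw : ∀ n ∈ N, B w n = 0) :
    B w H = 0 :=
  stmt_2_general B hsym hhodge N x hxN hx H w hwN hw
end

section
/- Let V be a finite-dimensional real vector space and B a symmetric bilinear form on V satisfying the Hodge index condition. Let L be a linear subspace of V containing a vector x with B(x,x) > 0. Suppose H ∈ V can be written as H = H₁ + H₂ where H₁ ∈ L and B(H₂, y) = 0 for all y ∈ L. Then B(H,H) ≤ B(H₁,H₁). -/
/-! If `B x x > 0`, a vector `y` orthogonal to `x` with `B y y > 0` would make `B` positive
definite on the plane spanned by `x` and `y`, contradicting the Hodge index condition. Hence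
`B y y ≤ 0` on the orthogonal complement of `x`, and for `H = H₁ + H₂` with `H₂ ⟂ L ∋ H₁` the
cross terms vanish: `B H H = B H₁ H₁ + B H₂ H₂ ≤ B H₁ H₁`. -/

section

variable {V : Type*} [AddCommGroup V] [Module ℝ V]

namespace LinearMap.BilinForm

variable {B : LinearMap.BilinForm ℝ V} {x y : V}

theorem apply_smul_add_smul_self (hxy : B x y = 0) (hyx : B y x = 0) (a b : ℝ) :
    B (a • x + b • y) (a • x + b • y) = a * a * B x x + b * b * B y y := by
  simp only [map_add, map_smul, LinearMap.add_apply, LinearMap.smul_apply, smul_eq_mul,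
    hxy, hyx]
  ring

theorem apply_add_self_of_orthogonal (hxy : B x y = 0) (hyx : B y x = 0) :
    B (x + y) (x + y) = B x x + B y y := by
  simpa using apply_smul_add_smul_self hxy hyx 1 1

theorem pos_on_span_pair_of_orthogonal (hx : 0 < B x x) (hy : 0 < B y y) (hxy : B x y = 0)
    (hyx : B y x = 0) : ∀ w ∈ Submodule.span ℝ {x, y}, w ≠ 0 → 0 < B w w := by
  intro w hw hw0
  obtain ⟨a, b, rfl⟩ := Submodule.mem_span_pair.mp hw
  rw [apply_smul_add_smul_self hxy hyx]
  have hab : a ≠ 0 ∨ b ≠ 0 := by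
    by_contra! h
    simp [h.1, h.2] at hw0
  rcases hab with ha | hb
  · nlinarith [mul_self_pos.mpr ha, mul_self_nonneg b]
  · nlinarith [mul_self_pos.mpr hb, mul_self_nonneg a]

theorem finrank_span_pair_of_orthogonal (hx : B x x ≠ 0) (hy : B y y ≠ 0) (hxy : B x y = 0)
    (hyx : B y x = 0) : Module.finrank ℝ (Submodule.span ℝ {x, y}) = 2 := by
  have hortho : B.iIsOrtho ![x, y] := by
    intro i j hij
    fin_cases i <;> fin_cases j <;> simp_all [Function.onFun]
  have hindep : LinearIndependent ℝ ![x, y] :=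
    linearIndependent_of_iIsOrtho hortho (by simp [Fin.forall_fin_two, hx, hy])
  rw [← Matrix.range_cons_cons_empty x y ![], finrank_span_eq_card hindep, Fintype.card_fin]

end LinearMap.BilinForm

open LinearMap.BilinForm in
theorem HodgeIndexCond.apply_self_nonpos_of_orthogonal {B : LinearMap.BilinForm ℝ V}
    (hB : HodgeIndexCond B) {x y : V} (hx : 0 < B x x) (hxy : B x y = 0) (hyx : B y x = 0) :
    B y y ≤ 0 := by
  by_contra! hy
  have h := hB _ (pos_on_span_pair_of_orthogonal hx hy hxy hyx)
  rw [finrank_span_pair_of_orthogonal hx.ne' hy.ne' hxy hyx] at h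
  omega

end

theorem stmt_3_general {V : Type*} [AddCommGroup V] [Module ℝ V]
    (B : LinearMap.BilinForm ℝ V) (hsym : B.IsSymm) (hhodge : HodgeIndexCond B)
    (L : Submodule ℝ V) (x : V) (hxL : x ∈ L) (hx : 0 < B x x)
    (H H₁ H₂ : V) (hsum : H = H₁ + H₂) (hH₁ : H₁ ∈ L)
    (hH₂ : ∀ y ∈ L, B H₂ y = 0) :
    B H H ≤ B H₁ H₁ := by
  have orthogonal_of_mem {y : V} (hy : y ∈ L) : B y H₂ = 0 := hsym.eq_iff.mp (hH₂ y hy)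
  have hH₂_nonpos : B H₂ H₂ ≤ 0 :=
    hhodge.apply_self_nonpos_of_orthogonal hx (orthogonal_of_mem hxL) (hH₂ x hxL)
  rw [hsum, LinearMap.BilinForm.apply_add_self_of_orthogonal (orthogonal_of_mem hH₁) (hH₂ H₁ hH₁)]
  linarith

theorem stmt_3 {V : Type*} [AddCommGroup V] [Module ℝ V] [FiniteDimensional ℝ V]
    (B : LinearMap.BilinForm ℝ V) (hsym : B.IsSymm) (hhodge : HodgeIndexCond B)
    (L : Submodule ℝ V) (x : V) (hxL : x ∈ L) (hx : 0 < B x x)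
    (H H₁ H₂ : V) (hsum : H = H₁ + H₂) (hH₁ : H₁ ∈ L)
    (hH₂ : ∀ y ∈ L, B H₂ y = 0) :
    B H H ≤ B H₁ H₁ :=
  stmt_3_general B hsym hhodge L x hxL hx H H₁ H₂ hsum hH₁ hH₂
end

section
/- Let V be a finite-dimensional real vector space and B a symmetric bilinear form on V satisfying the Hodge index condition. Let d ≥ 1 be a real number and let H, C₀, C ∈ V satisfy: B(H,H) > 4d²; B(C₀,C₀) = 0; B(C,C) = 0 or B(C,C) = −2; 0 ≤ B(C₀,H) ≤ d; 0 ≤ B(C,H) ≤ d; and B(C₀,C) = n for some natural number n. Then B(C₀,C) = 0. -/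
/-!
By the Hodge index condition, `B` is negative semidefinite on `H^⊥` when `B H H > 0`, which
yields the Hodge index inequality
`(h B(x,y) - B(x,H) B(y,H))² ≤ (h B(x,x) - B(x,H)²) (h B(y,y) - B(y,H)²)` with `h = B(H,H)`.
For `x = C₀`, `y = C` and `B(C,C) ≥ -2` it gives `h n² ≤ 2n B(C₀,H) B(C,H) + 2 B(C₀,H)² ≤ 2(n+1) d²`,
which contradicts `h > 4d²` as soon as `n ≥ 1`.
-/

lemma sq_mul_add_sq_mul_pos {p q s t : ℝ} (hp : 0 < p) (hq : 0 < q) (hst : s ≠ 0 ∨ t ≠ 0) :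
    0 < s ^ 2 * p + t ^ 2 * q := by
  rcases hst with hs | ht
  · nlinarith [sq_pos_of_ne_zero hs, sq_nonneg t]
  · nlinarith [sq_pos_of_ne_zero ht, sq_nonneg s]

namespace HodgeIndexCond

variable {V : Type*} [AddCommGroup V] [Module ℝ V] {B : LinearMap.BilinForm ℝ V}

/-- Otherwise `H` and `x` would span a positive definite plane. -/
lemma apply_self_nonpos_of_apply_eq_zero_s4 (hsym : B.IsSymm) (hB : HodgeIndexCond B) {H x : V}
    (hH : 0 < B H H) (hx : B x H = 0) : B x x ≤ 0 := by
  by_contra! hxx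
  have hxH : B H x = 0 := by rw [← hsym.eq, hx]
  have hquad (s t : ℝ) : B (s • H + t • x) (s • H + t • x) = s ^ 2 * B H H + t ^ 2 * B x x := by
    simp only [map_add, map_smul, LinearMap.add_apply, LinearMap.smul_apply, smul_eq_mul, hx, hxH]
    ring
  have hli : LinearIndependent ℝ ![H, x] := by
    refine LinearIndependent.pair_iff.2 fun s t hst => ?_
    by_contra hne
    have := sq_mul_add_sq_mul_pos hH hxx (not_and_or.1 hne)
    rw [← hquad, hst, map_zero] at this
    exact this.false
  have hdef : ∀ w ∈ Submodule.span ℝ (Set.range ![H, x]), w ≠ 0 → 0 < B w w := by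
    intro w hw hw0
    rw [Matrix.range_cons_cons_empty, Submodule.mem_span_pair] at hw
    obtain ⟨s, t, rfl⟩ := hw
    refine hquad s t ▸ sq_mul_add_sq_mul_pos hH hxx ?_
    by_contra! h0
    simp [h0.1, h0.2] at hw0
  have := hB _ hdef
  rw [finrank_span_eq_card hli, Fintype.card_fin] at this
  omega

/-- Reverse Cauchy–Schwarz on `H^⊥` (where `B` is negative semidefinite), applied to the
projections `B H H • x - B x H • H` and `B H H • y - B y H • H`. -/
lemma sq_sub_le_mul (hsym : B.IsSymm) (hB : HodgeIndexCond B) {H : V} (hH : 0 < B H H)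
    (x y : V) :
    (B H H * B x y - B x H * B y H) ^ 2 ≤
      (B H H * B x x - B x H ^ 2) * (B H H * B y y - B y H ^ 2) := by
  set h := B H H
  have hsymm (u v : V) : B u v = B v u := hsym.eq u v
  have hperp (u : V) : B (h • u - B u H • H) H = 0 := by
    simp only [map_sub, map_smul, LinearMap.sub_apply, LinearMap.smul_apply, smul_eq_mul, h]
    ring
  have hproj (u v : V) : B (h • u - B u H • H) (h • v - B v H • H) =
      h * (h * B u v - B u H * B v H) := by
    simp only [map_sub, map_smul, LinearMap.sub_apply, LinearMap.smul_apply, smul_eq_mul,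
      hsymm H v, h]
    ring
  set x' := h • x - B x H • H
  set y' := h • y - B y H • H
  have hquad (t : ℝ) : 0 ≤ -B y' y' * (t * t) + -(2 * B x' y') * t + -B x' x' := by
    have := apply_self_nonpos_of_apply_eq_zero_s4 hsym hB hH (x := x' + t • y')
      (by simp only [map_add, map_smul, LinearMap.add_apply, LinearMap.smul_apply, smul_eq_mul,
        x', y', hperp, mul_zero, add_zero])
    simp only [map_add, map_smul, LinearMap.add_apply, LinearMap.smul_apply, smul_eq_mul,
      hsymm y' x'] at this
    linarith
  have hdisc := discrim_le_zero hquad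
  rw [discrim, hproj, hproj, hproj] at hdisc
  have hh2 : 0 < h ^ 2 := by positivity
  nlinarith

end HodgeIndexCond

theorem stmt_4_general {V : Type*} [AddCommGroup V] [Module ℝ V]
    (B : LinearMap.BilinForm ℝ V) (hsym : B.IsSymm) (hhodge : HodgeIndexCond B)
    (d : ℝ) (H C₀ C : V)
    (hH : 4 * d ^ 2 < B H H)
    (hC₀ : B C₀ C₀ = 0)
    (hC : B C C = 0 ∨ B C C = -2)
    (hC₀H : 0 ≤ B C₀ H) (hC₀H' : B C₀ H ≤ d)
    (hCH' : B C H ≤ d)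
    (n : ℕ) (hn : B C₀ C = n) :
    B C₀ C = 0 := by
  set h := B H H
  set a := B C₀ H
  set b := B C H
  have hh : 0 < h := by nlinarith [sq_nonneg d]
  have hCC : -2 ≤ B C C := by rcases hC with hC | hC <;> linarith
  have hodge := HodgeIndexCond.sq_sub_le_mul hsym hhodge hh C₀ C
  rw [hC₀, hn] at hodge
  have hbound : h * n ^ 2 ≤ 2 * n * (a * b) + 2 * a ^ 2 := by
    have : h * (h * n ^ 2 - 2 * n * (a * b) - 2 * a ^ 2) ≤ 0 := by
      nlinarith [mul_nonneg (sq_nonneg a) (mul_nonneg hh.le (by linarith : 0 ≤ B C C + 2))]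
    nlinarith
  rw [hn, Nat.cast_eq_zero]
  by_contra hn0
  have hn1 : (1 : ℝ) ≤ n := Nat.one_le_cast.2 (Nat.one_le_iff_ne_zero.2 hn0)
  have hd : 0 ≤ d := hC₀H.trans hC₀H'
  have hab : a * b ≤ d ^ 2 := by nlinarith
  have ha : a ^ 2 ≤ d ^ 2 := by nlinarith
  have : 4 * d ^ 2 * n ^ 2 < 4 * d ^ 2 * n ^ 2 := calc
    4 * d ^ 2 * n ^ 2 < h * n ^ 2 := by gcongr
    _ ≤ 2 * n * (a * b) + 2 * a ^ 2 := hbound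
    _ ≤ 2 * n * d ^ 2 + 2 * d ^ 2 := by gcongr
    _ ≤ 4 * d ^ 2 * n ^ 2 := by nlinarith [mul_nonneg (sq_nonneg d) (sub_nonneg.2 hn1)]
  exact lt_irrefl _ this

theorem stmt_4 {V : Type*} [AddCommGroup V] [Module ℝ V] [FiniteDimensional ℝ V]
    (B : LinearMap.BilinForm ℝ V) (hsym : B.IsSymm) (hhodge : HodgeIndexCond B)
    (d : ℝ) (hd : 1 ≤ d) (H C₀ C : V)
    (hH : 4 * d ^ 2 < B H H)
    (hC₀ : B C₀ C₀ = 0)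
    (hC : B C C = 0 ∨ B C C = -2)
    (hC₀H : 0 ≤ B C₀ H) (hC₀H' : B C₀ H ≤ d)
    (hCH : 0 ≤ B C H) (hCH' : B C H ≤ d)
    (n : ℕ) (hn : B C₀ C = n) :
    B C₀ C = 0 :=
  stmt_4_general B hsym hhodge d H C₀ C hH hC₀ hC hC₀H hC₀H' hCH' n hn
end

section
/- Let V be a finite-dimensional real vector space and B a symmetric bilinear form on V satisfying the Hodge index condition. Let H, C, C′ ∈ V satisfy: B(H,H) ≥ 4; B(C,C) = B(C′,C′) = −2; B(C,H) = a for some integer a ≥ 1; B(C′,H) = 0; and B(C,C′) = n for some natural number n. Then n ≤ a + 1. -/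
/-!
The Hodge index condition gives the reverse Cauchy–Schwarz inequality `H² · x² ≤ (x·H)²`
whenever `H² > 0`: the component of `x` orthogonal to `H` cannot have positive square, since
together with `H` it would span a positive definite plane. Applied to `x = C + (n/2) C'` (the point
of the line `C + t C'` where `x²` is largest), for which
`x·H = a` and `x² = n²/2 - 2`, this gives `4 (n²/2 - 2) ≤ a²`, false once `n ≥ a + 2`.
-/

section

variable {V : Type*} [AddCommGroup V] [Module ℝ V] {B : LinearMap.BilinForm ℝ V}

theorem LinearMap.BilinForm.apply_smul_add_smul_of_orthogonal {x y : V} (hxy : B x y = 0)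
    (hyx : B y x = 0) (s t : ℝ) :
    B (s • x + t • y) (s • x + t • y) = s ^ 2 * B x x + t ^ 2 * B y y := by
  simp only [map_add, map_smul, LinearMap.add_apply, LinearMap.smul_apply, smul_eq_mul, hxy, hyx]
  ring

theorem LinearMap.BilinForm.pos_of_orthogonal {x y : V} (hxy : B x y = 0) (hyx : B y x = 0)
    (hx : 0 < B x x) (hy : 0 < B y y) {s t : ℝ} (hst : s ≠ 0 ∨ t ≠ 0) :
    0 < B (s • x + t • y) (s • x + t • y) := by
  rw [B.apply_smul_add_smul_of_orthogonal hxy hyx]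
  rcases hst with hs | ht
  · exact add_pos_of_pos_of_nonneg (by positivity) (by positivity)
  · exact add_pos_of_nonneg_of_pos (by positivity) (by positivity)

theorem HodgeIndexCond.nonpos_of_orthogonal (hB : HodgeIndexCond B) {H w : V} (hH : 0 < B H H)
    (hHw : B H w = 0) (hwH : B w H = 0) : B w w ≤ 0 := by
  by_contra! hw
  have hli : LinearIndependent ℝ ![H, w] := LinearIndependent.pair_iff.mpr fun s t hst => by
    by_contra hst0
    have := B.pos_of_orthogonal hHw hwH hH hw (not_and_or.mp hst0)
    simp [hst] at this
  have hposdef : ∀ v ∈ Submodule.span ℝ (Set.range ![H, w]), v ≠ 0 → 0 < B v v := by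
    intro v hv hv0
    rw [Matrix.range_cons_cons_empty] at hv
    obtain ⟨s, t, rfl⟩ := Submodule.mem_span_pair.mp hv
    refine B.pos_of_orthogonal hHw hwH hH hw (not_and_or.mp fun hst => hv0 ?_)
    simp [hst]
  have := hB _ hposdef
  rw [finrank_span_eq_card hli, Fintype.card_fin] at this
  omega

theorem HodgeIndexCond.mul_le_sq (hsym : B.IsSymm) (hB : HodgeIndexCond B) {H : V}
    (hH : 0 < B H H) (x : V) : B H H * B x x ≤ B x H ^ 2 := by
  set w := x - (B x H / B H H) • H
  have hHx : B H x = B x H := hsym.eq H x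
  have hwH : B w H = 0 := by
    simp only [w, map_sub, map_smul, LinearMap.sub_apply, LinearMap.smul_apply, smul_eq_mul]
    field_simp
    ring
  have hHw : B H w = 0 := (hsym.eq H w).trans hwH
  have hww : B H H * B w w = B H H * B x x - B x H ^ 2 := by
    simp only [w, map_sub, map_smul, LinearMap.sub_apply, LinearMap.smul_apply, smul_eq_mul, hHx]
    field_simp
    ring
  have := mul_nonpos_of_nonneg_of_nonpos hH.le (hB.nonpos_of_orthogonal hH hHw hwH)
  linarith

end

theorem stmt_6_general {V : Type*} [AddCommGroup V] [Module ℝ V]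
    (B : LinearMap.BilinForm ℝ V) (hsym : B.IsSymm) (hhodge : HodgeIndexCond B)
    (H C C' : V)
    (hH : 4 ≤ B H H)
    (hC : B C C = -2) (hC' : B C' C' = -2)
    (a : ℤ) (ha : 1 ≤ a) (hCH : B C H = a)
    (hC'H : B C' H = 0)
    (n : ℕ) (hn : B C C' = n) :
    (n : ℤ) ≤ a + 1 := by
  by_contra! hna
  have hn_ge : (a : ℝ) + 2 ≤ n := by exact_mod_cast (show a + 2 ≤ n by omega)
  have ha_ge : (1 : ℝ) ≤ a := by exact_mod_cast ha
  set x := C + ((n : ℝ) / 2) • C'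
  have hxH : B x H = a := by
    simp only [x, map_add, map_smul, LinearMap.add_apply, LinearMap.smul_apply, smul_eq_mul,
      hCH, hC'H, mul_zero, add_zero]
  have hxx : B x x = (n : ℝ) ^ 2 / 2 - 2 := by
    simp only [x, map_add, map_smul, LinearMap.add_apply, LinearMap.smul_apply, smul_eq_mul,
      hC, hC', hn, hsym.eq C' C]
    ring
  have hrcs := hhodge.mul_le_sq hsym (show 0 < B H H by linarith) x
  rw [hxH, hxx] at hrcs
  have hxx_nonneg : 0 ≤ (n : ℝ) ^ 2 / 2 - 2 := by nlinarith
  have hlt : (a : ℝ) ^ 2 < B H H * ((n : ℝ) ^ 2 / 2 - 2) :=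
    calc (a : ℝ) ^ 2 < 4 * ((n : ℝ) ^ 2 / 2 - 2) := by nlinarith
      _ ≤ B H H * ((n : ℝ) ^ 2 / 2 - 2) := mul_le_mul_of_nonneg_right hH hxx_nonneg
  exact hlt.not_ge hrcs

theorem stmt_6 {V : Type*} [AddCommGroup V] [Module ℝ V] [FiniteDimensional ℝ V]
    (B : LinearMap.BilinForm ℝ V) (hsym : B.IsSymm) (hhodge : HodgeIndexCond B)
    (H C C' : V)
    (hH : 4 ≤ B H H)
    (hC : B C C = -2) (hC' : B C' C' = -2)
    (a : ℤ) (ha : 1 ≤ a) (hCH : B C H = a)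
    (hC'H : B C' H = 0)
    (n : ℕ) (hn : B C C' = n) :
    (n : ℤ) ≤ a + 1 :=
  stmt_6_general B hsym hhodge H C C' hH hC hC' a ha hCH hC'H n hn
end

section
/- Let V be a finite-dimensional real vector space and B a symmetric bilinear form on V satisfying the Hodge index condition. Let H, C, C′ ∈ V satisfy: B(H,H) > 0; B(C,C) ≥ 0; B(C′,C′) ≥ 0; B(C,H) ≥ 0; and B(C′,H) ≥ 0. Then B(C,C′)·B(H,H) ≤ 2·B(C,H)·B(C′,H). -/
def hodgeForm {V : Type*} [AddCommGroup V] [Module ℝ V] (B : LinearMap.BilinForm ℝ V) (H : V) :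
    LinearMap.BilinForm ℝ V :=
  (LinearMap.mul ℝ ℝ).compl₁₂ (B.flip H) (B.flip H) - B H H • B

section

variable {V : Type*} [AddCommGroup V] [Module ℝ V] {B : LinearMap.BilinForm ℝ V}

lemma hodgeForm_apply (H u v : V) : hodgeForm B H u v = B u H * B v H - B H H * B u v := rfl

lemma LinearMap.BilinForm.apply_add_smul_self_of_isOrtho {x y : V} (hxy : B x y = 0)
    (hyx : B y x = 0) (a b : ℝ) :
    B (a • x + b • y) (a • x + b • y) = a * a * B x x + b * b * B y y := by
  simp only [map_add, map_smul, LinearMap.add_apply, LinearMap.smul_apply, smul_eq_mul, hxy, hyx]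
  ring

namespace HodgeIndexCond

/-- Otherwise `B` would be positive definite on the plane spanned by `x` and `y`. -/
lemma nonpos_of_isOrtho (hB : HodgeIndexCond B) {x y : V} (hxy : B x y = 0) (hyx : B y x = 0)
    (hx : 0 < B x x) : B y y ≤ 0 := by
  by_contra! hy
  have hpos (a b : ℝ) (hne : a • x + b • y ≠ 0) : 0 < B (a • x + b • y) (a • x + b • y) := by
    rw [B.apply_add_smul_self_of_isOrtho hxy hyx]
    rcases eq_or_ne a 0 with rfl | ha
    · rcases eq_or_ne b 0 with rfl | hb
      · simp at hne
      · nlinarith [mul_self_pos.mpr hb]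
    · nlinarith [mul_self_pos.mpr ha, mul_self_nonneg b]
  have hli : LinearIndependent ℝ ![x, y] := by
    refine LinearIndependent.pair_iff.mpr fun a b hab => ?_
    have hx' := congrArg (fun v => B v x) hab
    have hy' := congrArg (fun v => B v y) hab
    simp only [map_add, map_smul, LinearMap.add_apply, LinearMap.smul_apply, smul_eq_mul, hxy,
      hyx, map_zero, LinearMap.zero_apply] at hx' hy'
    constructor <;> nlinarith
  have hle := hB (Submodule.span ℝ {x, y}) fun w hw hne => by
    obtain ⟨a, b, rfl⟩ := Submodule.mem_span_pair.mp hw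
    exact hpos a b hne
  have htwo := finrank_span_eq_card hli
  rw [Matrix.range_cons_cons_empty, Fintype.card_fin] at htwo
  omega

/-- Reverse Cauchy–Schwarz: `B` is negative semidefinite on the orthogonal complement of `H`. -/
lemma apply_self_mul_le_sq (hB : HodgeIndexCond B) (hsym : B.IsSymm) {H : V} (hH : 0 < B H H)
    (v : V) : B v v * B H H ≤ B v H ^ 2 := by
  obtain ⟨t, ht⟩ : ∃ t : ℝ, t * B H H = B v H := ⟨B v H / B H H, div_mul_cancel₀ _ hH.ne'⟩
  have hvH : B (v - t • H) H = 0 := by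
    simp only [map_sub, map_smul, LinearMap.sub_apply, LinearMap.smul_apply, smul_eq_mul, ht,
      sub_self]
  have hHv : B H (v - t • H) = 0 := by rw [← hsym.eq, hvH]
  have hneg := hB.nonpos_of_isOrtho hHv hvH hH
  have hexp : B (v - t • H) (v - t • H) = B v v - t * B v H := by
    simp only [map_sub, map_smul, LinearMap.sub_apply, LinearMap.smul_apply, smul_eq_mul,
      hsym.eq H v]
    linear_combination t * ht
  have hsq : B v H ^ 2 = B H H * (t * B v H) := by rw [← ht]; ring
  nlinarith [mul_nonpos_of_nonneg_of_nonpos hH.le (hexp ▸ hneg)]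

lemma hodgeForm_apply_self_nonneg (hB : HodgeIndexCond B) (hsym : B.IsSymm) {H : V}
    (hH : 0 < B H H) (v : V) : 0 ≤ hodgeForm B H v v := by
  rw [hodgeForm_apply, ← sq, sub_nonneg, mul_comm]
  exact hB.apply_self_mul_le_sq hsym hH v

end HodgeIndexCond

end

theorem stmt_7_general {V : Type*} [AddCommGroup V] [Module ℝ V]
    (B : LinearMap.BilinForm ℝ V) (hsym : B.IsSymm) (hhodge : HodgeIndexCond B)
    (H C C' : V)
    (hH : 0 < B H H)
    (hC : 0 ≤ B C C) (hC' : 0 ≤ B C' C')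
    (hCH : 0 ≤ B C H) (hC'H : 0 ≤ B C' H) :
    B C C' * B H H ≤ 2 * (B C H) * (B C' H) := by
  have hpsd := hhodge.hodgeForm_apply_self_nonneg hsym hH
  have hle_sq {v : V} (hv : 0 ≤ B v v) : hodgeForm B H v v ≤ B v H ^ 2 := by
    rw [hodgeForm_apply]
    nlinarith [mul_nonneg hH.le hv]
  have hbound : hodgeForm B H C C' ^ 2 ≤ (B C H * B C' H) ^ 2 := calc
    _ = hodgeForm B H C C' * hodgeForm B H C' C := by
      rw [sq, hodgeForm_apply, hodgeForm_apply, hsym.eq C' C]; ring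
    _ ≤ hodgeForm B H C C * hodgeForm B H C' C' :=
      (hodgeForm B H).apply_mul_apply_le_of_forall_zero_le hpsd C C'
    _ ≤ B C H ^ 2 * B C' H ^ 2 := mul_le_mul (hle_sq hC) (hle_sq hC') (hpsd C') (sq_nonneg _)
    _ = _ := by ring
  have hlower := (abs_le_of_sq_le_sq' hbound (mul_nonneg hCH hC'H)).1
  rw [hodgeForm_apply] at hlower
  linarith

theorem stmt_7 {V : Type*} [AddCommGroup V] [Module ℝ V] [FiniteDimensional ℝ V]
    (B : LinearMap.BilinForm ℝ V) (hsym : B.IsSymm) (hhodge : HodgeIndexCond B)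
    (H C C' : V)
    (hH : 0 < B H H)
    (hC : 0 ≤ B C C) (hC' : 0 ≤ B C' C')
    (hCH : 0 ≤ B C H) (hC'H : 0 ≤ B C' H) :
    B C C' * B H H ≤ 2 * (B C H) * (B C' H) :=
  stmt_7_general B hsym hhodge H C C' hH hC hC' hCH hC'H
end

section
/- Let d ≥ 1 be a natural number, let c₀ be a natural number which is a perfect square, and let p₀ be the smallest prime number that does not divide 2d. Then there exists a natural number j with 1 ≤ j ≤ (p₀ + 1)/2 such that c₀ + j·d is not a perfect square. -/
/-!
Modulo `p₀` the numbers `c₀ + j * d`, `0 ≤ j ≤ (p₀ + 1) / 2`, are `(p₀ + 3) / 2` distinct residues,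
because `d` is invertible mod `p₀`. By Euler's criterion the nonzero squares of `ZMod p₀` are roots
of `X ^ (p₀ / 2) - 1`, so there are at most `(p₀ + 1) / 2` squares in `ZMod p₀`. Hence one of these
residues is not a square, and it is not the one with `j = 0` since `c₀` is a square.
-/

open Finset Polynomial

theorem FiniteField.card_filter_isSquare_le {F : Type*} [Field F] [Fintype F]
    [DecidablePred (IsSquare : F → Prop)] (hF : ringChar F ≠ 2) :
    #{x : F | IsSquare x} ≤ Fintype.card F / 2 + 1 := by
  classical
  have hsub : ({x : F | IsSquare x} : Finset F) ⊆
      insert 0 (nthRootsFinset (Fintype.card F / 2) (1 : F)) := by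
    intro x hx
    rcases eq_or_ne x 0 with rfl | hx0
    · exact mem_insert_self _ _
    · have hpos : 0 < Fintype.card F / 2 := by
        have := Fintype.one_lt_card (α := F)
        omega
      exact mem_insert_of_mem <|
        (mem_nthRootsFinset hpos _).2 ((FiniteField.isSquare_iff hF hx0).1 (mem_filter.1 hx).2)
  calc #{x : F | IsSquare x}
      ≤ #(insert 0 (nthRootsFinset (Fintype.card F / 2) (1 : F))) := card_le_card hsub
    _ ≤ #(nthRootsFinset (Fintype.card F / 2) (1 : F)) + 1 := card_insert_le _ _
    _ ≤ Fintype.card F / 2 + 1 := by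
        gcongr
        exact (Multiset.toFinset_card_le _).trans (card_nthRoots _ _)

theorem ZMod.injOn_add_natCast_mul {p : ℕ} [Fact p.Prime] (c : ZMod p) {d : ZMod p}
    (hd : d ≠ 0) : Set.InjOn (fun j : ℕ => c + j * d) (Set.Iio p) := by
  intro i hi j hj hij
  have hcast : (i : ZMod p) = j := mul_right_cancel₀ hd (add_left_cancel hij)
  rwa [ZMod.natCast_eq_natCast_iff', Nat.mod_eq_of_lt hi, Nat.mod_eq_of_lt hj] at hcast

theorem ZMod.exists_not_isSquare_add_natCast_mul {p : ℕ} [Fact p.Prime] (hp : p ≠ 2)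
    (c : ZMod p) {d : ZMod p} (hd : d ≠ 0) : ∃ j ≤ (p + 1) / 2, ¬IsSquare (c + j * d) := by
  by_contra! hsq
  have hodd : p % 2 = 1 := Nat.odd_iff.mp ((Fact.out : p.Prime).odd_of_ne_two hp)
  have htwo : 2 ≤ p := (Fact.out : p.Prime).two_le
  have hmaps : Set.MapsTo (fun j : ℕ => c + j * d) (range ((p + 1) / 2 + 1))
      ({x : ZMod p | IsSquare x} : Finset (ZMod p)) := fun j hj =>
    mem_filter.2 ⟨mem_univ _, hsq j (Nat.lt_succ_iff.1 (mem_range.1 hj))⟩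
  have hinj : Set.InjOn (fun j : ℕ => c + j * d) (range ((p + 1) / 2 + 1)) :=
    (ZMod.injOn_add_natCast_mul c hd).mono fun j hj => by
      simp only [coe_range, Set.mem_Iio] at hj ⊢
      omega
  have hcard := (card_le_card_of_injOn _ hmaps hinj).trans
    (FiniteField.card_filter_isSquare_le (F := ZMod p) (by rwa [ZMod.ringChar_zmod_n]))
  rw [card_range, ZMod.card] at hcard
  omega

theorem stmt_8_general (d : ℕ) (c₀ : ℕ) (hc₀ : IsSquare c₀)
    (p₀ : ℕ) (hp₀ : p₀.Prime) (hp₀d : ¬ p₀ ∣ 2 * d) :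
    ∃ j : ℕ, 1 ≤ j ∧ j ≤ (p₀ + 1) / 2 ∧ ¬ IsSquare (c₀ + j * d) := by
  have : Fact p₀.Prime := ⟨hp₀⟩
  have hp₀2 : p₀ ≠ 2 := by
    rintro rfl
    exact hp₀d (dvd_mul_right 2 d)
  have hd : (d : ZMod p₀) ≠ 0 := by
    rw [Ne, ZMod.natCast_eq_zero_iff]
    exact fun h => hp₀d (h.mul_left 2)
  have hcast : ∀ n : ℕ, IsSquare n → IsSquare (n : ZMod p₀) :=
    fun n hn => hn.map (Nat.castRingHom _)
  obtain ⟨j, hj, hnsq⟩ := ZMod.exists_not_isSquare_add_natCast_mul hp₀2 (c₀ : ZMod p₀) hd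
  refine ⟨j, Nat.one_le_iff_ne_zero.2 ?_, hj, fun h => hnsq ?_⟩
  · rintro rfl
    simp [hcast c₀ hc₀] at hnsq
  · simpa using hcast _ h

theorem stmt_8 (d : ℕ) (hd : 1 ≤ d) (c₀ : ℕ) (hc₀ : IsSquare c₀)
    (p₀ : ℕ) (hp₀ : p₀.Prime) (hp₀d : ¬ p₀ ∣ 2 * d)
    (hmin : ∀ q : ℕ, q.Prime → ¬ q ∣ 2 * d → p₀ ≤ q) :
    ∃ j : ℕ, 1 ≤ j ∧ j ≤ (p₀ + 1) / 2 ∧ ¬ IsSquare (c₀ + j * d) :=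
  stmt_8_general d c₀ hc₀ p₀ hp₀ hp₀d
end
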